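/- Let m be a rational number such that 2m^14 − 41m^12 − 328m^10 − 967m^8 − 1382m^6 − 1047m^4 − 308m^2 − 25 ≠ 0, and define u = m(m+1)^2(m−1)^3(m^2+3)(7m^6 + 23m^4 + 29m^2 + 5) / (2m^14 − 41m^12 − 328m^10 − 967m^8 − 1382m^6 − 1047m^4 − 308m^2 − 25). Then φ(u) is the square of a rational number, where φ(u) = (m^6 − 26m^4 − 31m^2 − 8)(m+1)^2·u^4 − 4m(m+1)(m^2+3)(m^4 − 6m^2 − 3)·u^3 + 2(m−1)(m+1)(3m^6 + 28m^4 + 31m^2 + 2)·u^2 − 4m(m−1)(m^2+3)(m^4 + 6m^2 + 1)·u + m^2(m+1)^2(m−1)^4. -/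

import Mathlib

/-!
The constant term of `φ` is the square `p²` with `p = m(m+1)(m-1)²`. Fermat's method takes the
quadratic `p + q₁u + q₂u²` whose square agrees with `φ(u)` up to order `u²`; then
`φ(u) - (p + q₁u + q₂u²)² = u³((a₃ - 2q₁q₂) + (a₄ - q₂²)u)`, and the displayed value of `u` is the
root `-(a₃ - 2q₁q₂)/(a₄ - q₂²)` of the linear factor. When `p = 0` the displayed `u` is `0`.
-/

theorem quartic_eq_sq_of_fermat {R : Type*} [CommRing R] {a₄ a₃ a₂ a₁ : R} (p q₁ q₂ u : R)
    (h₁ : a₁ = 2 * p * q₁) (h₂ : a₂ = 2 * p * q₂ + q₁ ^ 2)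
    (hu : (a₄ - q₂ ^ 2) * u + (a₃ - 2 * q₁ * q₂) = 0) :
    a₄ * u ^ 4 + a₃ * u ^ 3 + a₂ * u ^ 2 + a₁ * u + p ^ 2 = (p + q₁ * u + q₂ * u ^ 2) ^ 2 := by
  linear_combination u * h₁ + u ^ 2 * h₂ + u ^ 3 * hu

theorem stmt_10 (m u : ℚ)
    (hden : 2 * m ^ 14 - 41 * m ^ 12 - 328 * m ^ 10 - 967 * m ^ 8 -
      1382 * m ^ 6 - 1047 * m ^ 4 - 308 * m ^ 2 - 25 ≠ 0)
    (hu : u = m * (m + 1) ^ 2 * (m - 1) ^ 3 * (m ^ 2 + 3) *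
        (7 * m ^ 6 + 23 * m ^ 4 + 29 * m ^ 2 + 5) /
      (2 * m ^ 14 - 41 * m ^ 12 - 328 * m ^ 10 - 967 * m ^ 8 -
        1382 * m ^ 6 - 1047 * m ^ 4 - 308 * m ^ 2 - 25)) :
    ∃ r : ℚ, (m ^ 6 - 26 * m ^ 4 - 31 * m ^ 2 - 8) * (m + 1) ^ 2 * u ^ 4 -
        4 * m * (m + 1) * (m ^ 2 + 3) * (m ^ 4 - 6 * m ^ 2 - 3) * u ^ 3 +
        2 * (m - 1) * (m + 1) * (3 * m ^ 6 + 28 * m ^ 4 + 31 * m ^ 2 + 2) * u ^ 2 -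
        4 * m * (m - 1) * (m ^ 2 + 3) * (m ^ 4 + 6 * m ^ 2 + 1) * u +
        m ^ 2 * (m + 1) ^ 2 * (m - 1) ^ 4 = r ^ 2 := by
  by_cases hp : m * (m + 1) * (m - 1) = 0
  · have hu₀ : u = 0 := by
      rw [hu, show m * (m + 1) ^ 2 * (m - 1) ^ 3 = m * (m + 1) * (m - 1) * ((m + 1) * (m - 1) ^ 2)
        by ring, hp, zero_mul, zero_mul, zero_mul, zero_div]
    exact ⟨m * (m + 1) * (m - 1) ^ 2, by rw [hu₀]; ring⟩
  obtain ⟨⟨hm, hm₁⟩, hm₂⟩ := (mul_ne_zero_iff.mp hp).imp_left mul_ne_zero_iff.mp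
  set q₁ := -2 * (m ^ 2 + 3) * (m ^ 4 + 6 * m ^ 2 + 1) / ((m + 1) * (m - 1))
  set q₂ := (m ^ 12 - 17 * m ^ 10 - 282 * m ^ 8 - 706 * m ^ 6 - 771 * m ^ 4 - 253 * m ^ 2 - 20) /
    (m * (m - 1) * ((m + 1) * (m - 1)) ^ 3)
  have key := quartic_eq_sq_of_fermat
    (a₄ := (m ^ 6 - 26 * m ^ 4 - 31 * m ^ 2 - 8) * (m + 1) ^ 2)
    (a₃ := -(4 * m * (m + 1) * (m ^ 2 + 3) * (m ^ 4 - 6 * m ^ 2 - 3)))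
    (a₂ := 2 * (m - 1) * (m + 1) * (3 * m ^ 6 + 28 * m ^ 4 + 31 * m ^ 2 + 2))
    (a₁ := -(4 * m * (m - 1) * (m ^ 2 + 3) * (m ^ 4 + 6 * m ^ 2 + 1)))
    (m * (m + 1) * (m - 1) ^ 2) q₁ q₂ u
    (by simp only [q₁]; field_simp; ring)
    (by simp only [q₁, q₂]; field_simp; ring)
    (by
      -- an atom `D` lets `field_simp` use `hden : D ≠ 0`
      set D := 2 * m ^ 14 - 41 * m ^ 12 - 328 * m ^ 10 - 967 * m ^ 8 - 1382 * m ^ 6 -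
        1047 * m ^ 4 - 308 * m ^ 2 - 25
      simp only [q₁, q₂, hu]
      field_simp
      simp only [D]
      ring)
  exact ⟨m * (m + 1) * (m - 1) ^ 2 + q₁ * u + q₂ * u ^ 2, by linear_combination key⟩
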